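/- The field ℚ(θ_k) generated over ℚ by θ_k = Σ_{y∈U_k} (ζ_p^y − 1) has degree n over ℚ; equivalently, the minimal polynomial of θ_k over ℚ has degree n = (p−1)/k. (Hence ℚ(θ_k) is the unique intermediate field of ℚ(ζ_p)/ℚ of degree n.) -/

import Mathlib

/-!
Inside `K = ℚ(ζ_p)` the Galois group is `(ℤ/p)ˣ`, with `a` acting by `ζ ↦ ζ^a`, and it sends
`θ_k` to `∑_{y ∈ U_k} (ζ^{ay} - 1)`. Since `ζ, ζ², …, ζ^{p-1}` are linearly independent over `ℚ`,
this conjugate equals `θ_k` exactly when `a U_k = U_k`, i.e. when `a ∈ U_k`. So the stabilizer of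
`θ_k` is `U_k`, and the degree of `θ_k`, being the index of its stabilizer, is `(p - 1) / k`.
-/

open Polynomial IntermediateField

theorem IsGalois.natDegree_minpoly_eq_index_stabilizer {F E : Type*} [Field F] [Field E]
    [Algebra F E] [IsGalois F E] (x : E) :
    (minpoly F x).natDegree = (MulAction.stabilizer Gal(E/F) x).index := by
  rw [← adjoin.finrank (Algebra.IsIntegral.isIntegral x), finrank_eq_fixingSubgroup_index]
  congr 1
  refine le_antisymm (fun σ hσ => hσ ⟨x, mem_adjoin_simple_self F x⟩) ?_
  rw [← le_iff_le, adjoin_simple_le_iff]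
  exact fun σ => σ.2

theorem IsPrimitiveRoot.isCyclotomicExtension_adjoin_simple {F L : Type*} [Field F] [Field L]
    [Algebra F L] {ζ : L} {n : ℕ} [NeZero n] (hζ : IsPrimitiveRoot ζ n) :
    IsCyclotomicExtension {n} F F⟮ζ⟯ := by
  have hint : IsIntegral F ζ := (hζ.isIntegral (NeZero.pos n)).tower_top
  change IsCyclotomicExtension {n} F F⟮ζ⟯.toSubalgebra
  rw [adjoin_simple_toSubalgebra_of_isAlgebraic hint.isAlgebraic]
  exact hζ.adjoin_isCyclotomicExtension F

-- `autToPow` does not depend on the primitive root: it is always the cyclotomic character.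
theorem IsPrimitiveRoot.autToPow_surjective {K L : Type*} [Field K] [CommRing L] [IsDomain L]
    [Algebra K L] {n : ℕ} [NeZero n] [IsCyclotomicExtension {n} K L] {μ : L}
    (hμ : IsPrimitiveRoot μ n) (h : Irreducible (cyclotomic n K)) :
    Function.Surjective (hμ.autToPow K) := by
  convert (IsCyclotomicExtension.autEquivPow L h).surjective using 1
  ext σ : 1
  exact (hμ.autToPow_eq_modularCyclotomicCharacter n K σ).trans
    ((IsCyclotomicExtension.zeta_spec n K L).autToPow_eq_modularCyclotomicCharacter n K σ).symm

-- `ζ^j = ζ * ζ^(j-1)`, and `1, ζ, …, ζ^(p-2)` is a power basis of `ℚ(ζ)`.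
theorem IsPrimitiveRoot.linearIndependent_pow_val {L : Type*} [Field L] [CharZero L] {p : ℕ}
    [hp : Fact p.Prime] {ζ : L} (hζ : IsPrimitiveRoot ζ p) :
    LinearIndependent ℚ fun j : {j : ZMod p // j ≠ 0} => ζ ^ j.1.val := by
  have hdeg : (minpoly ℚ ζ).natDegree = p - 1 := by
    rw [← cyclotomic_eq_minpoly_rat hζ hp.out.pos, natDegree_cyclotomic,
      Nat.totient_prime hp.out]
  have hpow : LinearIndependent ℚ fun i : Fin (p - 1) => ζ ^ (i : ℕ) :=
    hdeg ▸ linearIndependent_pow ζ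
  have hval (j : {j : ZMod p // j ≠ 0}) : j.1.val - 1 + 1 = j.1.val :=
    Nat.sub_add_cancel (Nat.one_le_iff_ne_zero.mpr ((ZMod.val_ne_zero j.1).mpr j.2))
  let e : {j : ZMod p // j ≠ 0} → Fin (p - 1) := fun j =>
    ⟨j.1.val - 1, by have := ZMod.val_lt j.1; have := hval j; omega⟩
  have he : Function.Injective e := fun i j hij => by
    have hij' := congrArg (· + 1) (Fin.ext_iff.mp hij)
    simp only [e, hval] at hij'
    exact Subtype.ext (ZMod.val_injective p hij')
  have hmul : Function.Injective (LinearMap.mulLeft ℚ ζ) :=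
    mul_right_injective₀ (hζ.ne_zero hp.out.ne_zero)
  have hfun : (fun j : {j : ZMod p // j ≠ 0} => ζ ^ j.1.val) =
      LinearMap.mulLeft ℚ ζ ∘ (fun i : Fin (p - 1) => ζ ^ (i : ℕ)) ∘ e := by
    ext j
    simp only [Function.comp_apply, LinearMap.mulLeft_apply, e, ← pow_succ', hval]
  rw [hfun]
  exact (hpow.comp e he).map' _ (LinearMap.ker_eq_bot.mpr hmul)

theorem IsPrimitiveRoot.injOn_sum_pow_val {L : Type*} [Field L] [CharZero L] {p : ℕ}
    [Fact p.Prime] {ζ : L} (hζ : IsPrimitiveRoot ζ p) :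
    Set.InjOn (fun S : Finset (ZMod p) => ∑ j ∈ S, ζ ^ j.val) {S | 0 ∉ S} := by
  have hsum (S : Finset (ZMod p)) (hS : 0 ∉ S) : ∑ j ∈ S, ζ ^ j.val =
      ∑ j : {j : ZMod p // j ≠ 0}, (if j.1 ∈ S then (1 : ℚ) else 0) • ζ ^ j.1.val := by
    simp only [ite_smul, one_smul, zero_smul]
    rw [← Finset.sum_subtype (Finset.univ.erase 0) (by simp)
      (fun j => if j ∈ S then ζ ^ j.val else 0), Finset.sum_erase _ (by simp [hS]),
      Finset.sum_ite_mem, Finset.univ_inter]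
  intro S hS T hT hST
  have hcoeff := Fintype.linearIndependent_iffₛ.mp hζ.linearIndependent_pow_val _ _
    ((hsum S hS).symm.trans (hST.trans (hsum T hT)))
  ext j
  by_cases hj : j = 0
  · subst hj
    exact iff_of_false hS hT
  · have hcoeff_j := hcoeff ⟨j, hj⟩
    split_ifs at hcoeff_j <;> simp_all

theorem map_mulLeft_filter_pow_eq_one_eq_self_iff {M : Type*} [CommMonoid M] [Fintype M]
    [DecidableEq M] (k : ℕ) (a : Mˣ) :
    (Finset.univ.filter (fun y : M => y ^ k = 1)).map (Units.mulLeft a).toEmbedding =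
      Finset.univ.filter (fun y : M => y ^ k = 1) ↔ a ∈ rootsOfUnity k M := by
  rw [mem_rootsOfUnity]
  constructor
  · intro h
    have ha := Finset.mem_map_of_mem (Units.mulLeft a).toEmbedding
      (by simp : (1 : M) ∈ Finset.univ.filter (fun y : M => y ^ k = 1))
    rw [h] at ha
    simpa [Units.ext_iff] using ha
  · intro ha
    ext y
    rw [Finset.mem_map_equiv]
    simp only [Finset.mem_filter, Finset.mem_univ, true_and, Units.mulLeft_symm,
      Units.mulLeft_apply, mul_pow]
    rw [← Units.val_pow_eq_pow_val, inv_pow, ha, inv_one, Units.val_one, one_mul]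

theorem index_rootsOfUnity_of_dvd {R : Type*} [CommRing R] [IsDomain R] [Finite Rˣ] {k : ℕ}
    (hk : k ∣ Nat.card Rˣ) : (rootsOfUnity k R).index = Nat.card Rˣ / k := by
  obtain ⟨g, hg⟩ := IsCyclic.exists_ofOrder_eq_natCard (α := Rˣ)
  have hk0 : NeZero k := ⟨fun h => Nat.card_pos.ne' (Nat.eq_zero_of_zero_dvd (h ▸ hk))⟩
  have hgk : IsPrimitiveRoot (g ^ (Nat.card Rˣ / k)) k :=
    (hg ▸ IsPrimitiveRoot.orderOf g).pow Nat.card_pos (Nat.div_mul_cancel hk).symm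
  have hindex := (rootsOfUnity k R).index_mul_card
  rw [hgk.card_rootsOfUnity'] at hindex
  exact Nat.eq_div_of_mul_eq_left hk0.out hindex

/-- The conjugate `σ_a(θ_k)` of `θ_k = cyclotomicTheta ζ k 1`. -/
def cyclotomicTheta {R : Type*} [CommRing R] {p : ℕ} [NeZero p] (ζ : R) (k : ℕ)
    (a : (ZMod p)ˣ) : R :=
  ∑ y ∈ Finset.univ.filter (fun y : ZMod p => y ^ k = 1), (ζ ^ ((a : ZMod p) * y).val - 1)

theorem IsPrimitiveRoot.autToPow_cyclotomicTheta {R S : Type*} [CommRing R] [CommRing S]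
    [IsDomain S] [Algebra R S] {p : ℕ} [NeZero p] {μ : S} (hμ : IsPrimitiveRoot μ p)
    (σ : S ≃ₐ[R] S) (k : ℕ) (a : (ZMod p)ˣ) :
    σ (cyclotomicTheta μ k a) = cyclotomicTheta μ k (hμ.autToPow R σ * a) := by
  simp only [cyclotomicTheta, map_sum, map_sub, map_pow, map_one, ← hμ.autToPow_spec R σ,
    ← pow_mul, Units.val_mul, mul_assoc]
  refine Finset.sum_congr rfl fun y _ => ?_
  rw [pow_eq_pow_mod _ hμ.pow_eq_one, ← ZMod.val_mul]

theorem IsPrimitiveRoot.cyclotomicTheta_eq_one_iff {L : Type*} [Field L] [CharZero L] {p : ℕ}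
    [Fact p.Prime] {ζ : L} (hζ : IsPrimitiveRoot ζ p) {k : ℕ} (hk : k ≠ 0) (a : (ZMod p)ˣ) :
    cyclotomicTheta ζ k a = cyclotomicTheta ζ k (1 : (ZMod p)ˣ) ↔
      a ∈ rootsOfUnity k (ZMod p) := by
  set U := Finset.univ.filter (fun y : ZMod p => y ^ k = 1)
  have hsum (b : (ZMod p)ˣ) : cyclotomicTheta ζ k b =
      ∑ j ∈ U.map (Units.mulLeft b).toEmbedding, ζ ^ j.val - U.card := by
    rw [cyclotomicTheta, Finset.sum_sub_distrib, Finset.sum_map, Finset.sum_const, nsmul_one]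
    rfl
  have h0 (b : (ZMod p)ˣ) : (0 : ZMod p) ∉ U.map (Units.mulLeft b).toEmbedding := by
    rw [Finset.mem_map_equiv]
    simp only [Units.mulLeft_symm, Units.mulLeft_apply, mul_zero, U, Finset.mem_filter,
      zero_pow hk]
    simp
  rw [← map_mulLeft_filter_pow_eq_one_eq_self_iff, hsum, hsum, sub_left_inj]
  have hU1 : U.map (Units.mulLeft 1).toEmbedding = U :=
    (map_mulLeft_filter_pow_eq_one_eq_self_iff k 1).mpr (one_mem _)
  have hU : (0 : ZMod p) ∉ U := hU1 ▸ h0 1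
  rw [hU1]
  exact ⟨fun h => hζ.injOn_sum_pow_val (h0 a) hU h, fun h => by rw [h]⟩

theorem IsPrimitiveRoot.stabilizer_cyclotomicTheta {L : Type*} [Field L] [CharZero L] {p : ℕ}
    [Fact p.Prime] {ζ : L} (hζ : IsPrimitiveRoot ζ p) {k : ℕ} (hk : k ≠ 0) :
    MulAction.stabilizer Gal(L/ℚ) (cyclotomicTheta ζ k (1 : (ZMod p)ˣ)) =
      (rootsOfUnity k (ZMod p)).comap (hζ.autToPow ℚ) := by
  ext σ
  rw [MulAction.mem_stabilizer_iff, AlgEquiv.smul_def, hζ.autToPow_cyclotomicTheta, mul_one,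
    hζ.cyclotomicTheta_eq_one_iff hk, Subgroup.mem_comap]

theorem minpoly_theta_natDegree_general (p : ℕ) [Fact p.Prime]
    (k : ℕ) (hk1 : 1 ≤ k) (hkd : k ∣ p - 1)
    (n : ℕ) (hn : n = (p - 1) / k)
    (ζ : ℂ) (hζ : ζ = Complex.exp (2 * Real.pi * Complex.I / p))
    (θ : ℂ)
    (hθ : θ = ∑ y ∈ Finset.univ.filter (fun y : ZMod p => y ^ k = 1), (ζ ^ y.val - 1)) :
    (minpoly ℚ θ).natDegree = n := by
  have hζp : IsPrimitiveRoot ζ p := hζ ▸ Complex.isPrimitiveRoot_exp p (NeZero.ne p)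
  set z := AdjoinSimple.gen ℚ ζ
  have hz : IsPrimitiveRoot z p :=
    .of_map_of_injective (f := algebraMap ℚ⟮ζ⟯ ℂ) hζp (algebraMap ℚ⟮ζ⟯ ℂ).injective
  -- instance search picks `DivisionRing.toRatAlgebra` here, not the lemma's `algebra'`
  have : IsCyclotomicExtension {p} ℚ ℚ⟮ζ⟯ := by
    convert hζp.isCyclotomicExtension_adjoin_simple (F := ℚ) <;> rfl
  have := IsCyclotomicExtension.isGalois {p} ℚ ℚ⟮ζ⟯
  have hθz : θ = algebraMap ℚ⟮ζ⟯ ℂ (cyclotomicTheta z k (1 : (ZMod p)ˣ)) := by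
    simp [hθ, cyclotomicTheta, z]
  have hcard : Nat.card (ZMod p)ˣ = p - 1 := by rw [Nat.card_eq_fintype_card, ZMod.card_units]
  rw [hθz, minpoly.algebraMap_eq (algebraMap ℚ⟮ζ⟯ ℂ).injective,
    IsGalois.natDegree_minpoly_eq_index_stabilizer, hz.stabilizer_cyclotomicTheta (by omega),
    Subgroup.index_comap_of_surjective _
      (hz.autToPow_surjective (cyclotomic.irreducible_rat (Fact.out : p.Prime).pos)),
    index_rootsOfUnity_of_dvd (hcard ▸ hkd), hcard, hn]

/-- The field `ℚ(θ_k)` has degree `n = (p-1)/k` over `ℚ`; equivalently,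
the minimal polynomial of `θ_k = ∑_{y ∈ U_k} (ζ_p^y - 1)` over `ℚ` has degree `n`. -/
theorem minpoly_theta_natDegree (p : ℕ) [Fact p.Prime] (hp : Odd p)
    (k : ℕ) (hk1 : 1 ≤ k) (hk2 : k < p - 1) (hkd : k ∣ p - 1)
    (n : ℕ) (hn : n = (p - 1) / k)
    (ζ : ℂ) (hζ : ζ = Complex.exp (2 * Real.pi * Complex.I / p))
    (θ : ℂ)
    (hθ : θ = ∑ y ∈ Finset.univ.filter (fun y : ZMod p => y ^ k = 1), (ζ ^ y.val - 1)) :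
    (minpoly ℚ θ).natDegree = n :=
  minpoly_theta_natDegree_general p k hk1 hkd n hn ζ hζ θ hθ
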